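/- (Theorem 3.1, Affine Broken Circuit Theorem) Let B = {H_1, …, H_m} be a finite arrangement of affine hyperplanes in F^n and fix a linear order on [m]. Write χ(B, t) = a_0 t^n − a_1 t^{n−1} + ⋯ + (−1)^r a_r t^{n−r}, where r is the rank of B. Then for every 0 ≤ k ≤ r, the coefficient a_k equals the number of k-element affine NBC subsets of [m] with respect to B. -/

import Mathlib

open Matrix

/-- The intersection poset of the arrangement `{H i}` of hyperplanes of the ambient space
`V`: `V` together with all nonempty intersections of subfamilies, i.e. the collection of
nonempty sets of the form `V ∩ ⋂ i ∈ S, H i` (the empty subfamily `S = ∅` yields `V`);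
it is ordered by reverse inclusion. -/
def flats {E ι : Type*} (V : Set E) (H : ι → Set E) : Set (Set E) :=
  {W | (∃ S : Set ι, W = V ∩ ⋂ i ∈ S, H i) ∧ W.Nonempty}

lemma flats_finite {E ι : Type*} [Finite ι] (V : Set E) (H : ι → Set E) :
    (flats V H).Finite := by
  have hsub : flats V H ⊆ (fun S : Set ι => V ∩ ⋂ i ∈ S, H i) '' Set.univ := by
    rintro W ⟨⟨S, rfl⟩, -⟩
    exact ⟨S, Set.mem_univ _, rfl⟩
  exact (Set.finite_univ.image _).subset hsub

lemma self_mem_flats {E ι : Type*} {V : Set E} (H : ι → Set E) (hV : V.Nonempty) :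
    V ∈ flats V H :=
  ⟨⟨∅, by simp⟩, hV⟩

/-- The dimension of a subset of an `F`-vector space: the dimension of the direction of its
affine span. -/
noncomputable def adim (F : Type*) [Field F] {E : Type*} [AddCommGroup E] [Module F E]
    (W : Set E) : ℕ :=
  Module.finrank F (affineSpan F W).direction

open Classical in
/-- The characteristic polynomial `χ(B, t) = ∑_{W ∈ L(B)} μ(V, W) t^(dim W)` of the
arrangement `B = {H i}` of hyperplanes of the ambient space `V`, where `μ` is the Möbius
function of the intersection poset `L(B)` ordered by reverse inclusion (so the Möbius value
`μ(V, W)` of the reverse-inclusion poset is `IncidenceAlgebra.mu` from `W` to `V` in the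
inclusion order). -/
noncomputable def chi (F : Type*) [Field F] {E ι : Type*} [AddCommGroup E] [Module F E]
    [Finite ι] (V : Set E) (H : ι → Set E) : Polynomial ℤ :=
  letI : Fintype ↥(flats V H) := (flats_finite V H).fintype
  letI : LocallyFiniteOrder ↥(flats V H) := Fintype.toLocallyFiniteOrder
  if hV : V.Nonempty then
    ∑ W : ↥(flats V H),
      Polynomial.C (IncidenceAlgebra.mu ℤ W (⟨V, self_mem_flats H hV⟩ : ↥(flats V H))) *
        Polynomial.X ^ adim F (W : Set E)
  else 0

variable {F : Type*} [Field F] {m n : ℕ}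

/-- `J` is affine independent with respect to the arrangement `H` in `F^n`. -/
def AffIndepB (H : Fin m → Set (Fin n → F)) (J : Finset (Fin m)) : Prop :=
  (⋂ j ∈ J, H j).Nonempty ∧ n - adim F (⋂ j ∈ J, H j) = J.card

/-- `J` is affine dependent with respect to the arrangement `H` in `F^n`. -/
def AffDepB (H : Fin m → Set (Fin n → F)) (J : Finset (Fin m)) : Prop :=
  (⋂ j ∈ J, H j).Nonempty ∧ n - adim F (⋂ j ∈ J, H j) < J.card

/-- `I` is an affine circuit of `H`: a minimal affine dependent set. -/
def AffCircuitB (H : Fin m → Set (Fin n → F)) (I : Finset (Fin m)) : Prop :=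
  AffDepB H I ∧ ∀ J : Finset (Fin m), J ⊂ I → AffIndepB H J

/-- `J` is an affine NBC set of `H` with respect to a linear order `ord` on `[m]`:
`⋂_{j ∈ J} H_j ≠ ∅` and `J` contains no affine broken circuit `I ∖ {max I}`. -/
def AffNBCB (ord : LinearOrder (Fin m)) (H : Fin m → Set (Fin n → F))
    (J : Finset (Fin m)) : Prop :=
  (⋂ j ∈ J, H j).Nonempty ∧
    ∀ (I : Finset (Fin m)) (hI : I.Nonempty), AffCircuitB H I →
      ¬ I.erase (@Finset.max' (Fin m) ord I hI) ⊆ J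


set_option linter.unusedSectionVars false

section Geom

variable {F : Type*} [Field F] {E : Type*} [AddCommGroup E] [Module F E]

lemma adim_mono [FiniteDimensional F E] {W W' : Set E} (h : W ⊆ W') :
    adim F W ≤ adim F W' :=
  Submodule.finrank_mono (AffineSubspace.direction_le (affineSpan_mono F h))

lemma adim_le [FiniteDimensional F E] (W : Set E) : adim F W ≤ Module.finrank F E :=
  Submodule.finrank_le _

lemma adim_univ : adim F (Set.univ : Set E) = Module.finrank F E := by
  unfold adim
  rw [AffineSubspace.span_univ, AffineSubspace.direction_top]
  exact finrank_top F E

lemma adim_coe (A : AffineSubspace F E) :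
    adim F (A : Set E) = Module.finrank F A.direction := by
  unfold adim; rw [A.affineSpan_coe]

/-- Nested affine subspaces with same dimension are equal. -/
lemma eq_of_subset_adim [FiniteDimensional F E] {A B : AffineSubspace F E}
    (h : (A : Set E) ⊆ B) (hne : (A : Set E).Nonempty)
    (hd : adim F (B : Set E) ≤ adim F (A : Set E)) : (A : Set E) = B := by
  rw [adim_coe, adim_coe] at hd
  have hAB : A ≤ B := h
  have hdir : A.direction = B.direction :=
    Submodule.eq_of_le_of_finrank_le (AffineSubspace.direction_le hAB) hd
  obtain ⟨p, hp⟩ := hne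
  rw [AffineSubspace.ext_of_direction_eq hdir ⟨p, hp, h hp⟩]

/-- rank-nullity bound: cutting a submodule with a functional's kernel loses at most 1 dim -/
lemma finrank_inf_ker [FiniteDimensional F E] (U : Submodule F E) (φ : E →ₗ[F] F) :
    Module.finrank F U ≤ Module.finrank F ↥(U ⊓ LinearMap.ker φ) + 1 := by
  set ψ := φ.comp U.subtype with hψ
  have h1 : Module.finrank F (LinearMap.range ψ) + Module.finrank F (LinearMap.ker ψ)
      = Module.finrank F U := LinearMap.finrank_range_add_finrank_ker ψ
  have h2 : Module.finrank F (LinearMap.range ψ) ≤ 1 := by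
    simpa using Submodule.finrank_le (LinearMap.range ψ)
  have h3 : LinearMap.ker ψ = Submodule.comap U.subtype (LinearMap.ker φ) := by
    rw [hψ, LinearMap.ker_comp]
  have h4 : Module.finrank F (LinearMap.ker ψ)
      = Module.finrank F ↥(U ⊓ LinearMap.ker φ) := by
    rw [h3]
    have := (Submodule.equivSubtypeMap U (Submodule.comap U.subtype (LinearMap.ker φ))).finrank_eq
    rw [this, Submodule.map_comap_subtype]
  omega

end Geom

section Hyp

variable {F : Type*} [Field F] {n : ℕ}

/-- dot product as a linear map -/
def dotL (v : Fin n → F) : (Fin n → F) →ₗ[F] F where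
  toFun x := v ⬝ᵥ x
  map_add' x y := by simp [dotProduct_add]
  map_smul' c x := by simp [dotProduct_smul]

/-- the affine hyperplane `{x | v ⬝ᵥ x = c}` as an affine subspace -/
def hypA (v : Fin n → F) (c : F) : AffineSubspace F (Fin n → F) where
  carrier := {x | v ⬝ᵥ x = c}
  smul_vsub_vadd_mem' t {p₁ p₂ p₃} h₁ h₂ h₃ := by
    simp only [Set.mem_setOf_eq] at *
    simp [vsub_eq_sub, vadd_eq_add, dotProduct_add, dotProduct_smul,
      dotProduct_sub, h₁, h₂, h₃, smul_eq_mul]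

lemma hypA_coe (v : Fin n → F) (c : F) : (hypA v c : Set (Fin n → F)) = {x | v ⬝ᵥ x = c} := rfl

lemma hypA_nonempty {v : Fin n → F} (hv : v ≠ 0) (c : F) :
    ({x | v ⬝ᵥ x = c} : Set (Fin n → F)).Nonempty := by
  obtain ⟨j, hj⟩ := Function.ne_iff.1 hv
  refine ⟨Pi.single j (c / v j), ?_⟩
  simp only [Set.mem_setOf_eq, dotProduct_single]
  simp only [Pi.zero_apply] at hj
  field_simp

lemma hypA_ne_univ {v : Fin n → F} (hv : v ≠ 0) (c : F) :
    ({x | v ⬝ᵥ x = c} : Set (Fin n → F)) ≠ Set.univ := by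
  obtain ⟨j, hj⟩ := Function.ne_iff.1 hv
  intro h
  have h1 : (Pi.single j (c / v j) : Fin n → F) ∈ ({x | v ⬝ᵥ x = c} : Set (Fin n → F)) := by
    rw [h]; trivial
  have h2 : (Pi.single j ((c+1) / v j) : Fin n → F) ∈ ({x | v ⬝ᵥ x = c} : Set (Fin n → F)) := by
    rw [h]; trivial
  simp only [Pi.zero_apply] at hj
  simp only [Set.mem_setOf_eq, dotProduct_single] at h1 h2
  rw [mul_div_cancel₀ _ hj] at h1 h2
  simp at h2

lemma direction_hypA {v : Fin n → F} (hv : v ≠ 0) (c : F) :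
    (hypA v c).direction = LinearMap.ker (dotL v) := by
  have hne : ((hypA v c : Set (Fin n → F))).Nonempty := hypA_nonempty hv c
  ext y
  rw [AffineSubspace.mem_direction_iff_eq_vsub hne]
  constructor
  · rintro ⟨a, ha, b, hb, rfl⟩
    have ha' : v ⬝ᵥ a = c := ha
    have hb' : v ⬝ᵥ b = c := hb
    simp [LinearMap.mem_ker, dotL, vsub_eq_sub, dotProduct_sub, ha', hb']
  · intro hy
    obtain ⟨p, hp⟩ := hne
    have hp' : v ⬝ᵥ p = c := hp
    have hy' : v ⬝ᵥ y = 0 := hy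
    refine ⟨y + p, ?_, p, hp, ?_⟩
    · show v ⬝ᵥ (y + p) = c
      rw [dotProduct_add, hy', hp', zero_add]
    · simp [vsub_eq_sub]

/-- Key codimension bound: intersecting with a hyperplane loses at most one dimension. -/
lemma adim_inter_hyp {A : AffineSubspace F (Fin n → F)} {v : Fin n → F} (hv : v ≠ 0) (c : F)
    (hne : ((A : Set (Fin n → F)) ∩ {x | v ⬝ᵥ x = c}).Nonempty) :
    adim F (A : Set (Fin n → F)) ≤ adim F ((A : Set (Fin n → F)) ∩ {x | v ⬝ᵥ x = c}) + 1 := by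
  have hInt : ((A : Set (Fin n → F)) ∩ {x | v ⬝ᵥ x = c}) = ↑(A ⊓ hypA v c) := by
    ext x
    simp only [Set.mem_inter_iff, AffineSubspace.mem_coe, AffineSubspace.mem_inf_iff]
    exact Iff.rfl
  obtain ⟨p, hpA, hpH⟩ := hne
  rw [hInt, adim_coe, adim_coe,
    AffineSubspace.direction_inf_of_mem (hpA : p ∈ A) (hpH : p ∈ hypA v c),
    direction_hypA hv c]
  exact finrank_inf_ker A.direction (dotL v)

end Hyp


section Comb

variable {F : Type*} [Field F] {m n : ℕ} {H : Fin m → Set (Fin n → F)}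

/-- the intersection of the subfamily `S` -/
def capSet (H : Fin m → Set (Fin n → F)) (S : Finset (Fin m)) : Set (Fin n → F) :=
  ⋂ j ∈ S, H j

lemma capSet_antitone {S T : Finset (Fin m)} (h : S ⊆ T) : capSet H T ⊆ capSet H S := by
  unfold capSet
  exact Set.biInter_subset_biInter_left h

lemma capSet_empty : capSet H (∅ : Finset (Fin m)) = Set.univ := by simp [capSet]

lemma capSet_insert (j : Fin m) (S : Finset (Fin m)) :
    capSet H (insert j S) = H j ∩ capSet H S := by
  simp [capSet]

lemma capSet_subset {S : Finset (Fin m)} {j : Fin m} (hj : j ∈ S) : capSet H S ⊆ H j := by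
  intro x hx
  exact Set.mem_iInter₂.1 hx j hj

variable (hH : ∀ i, ∃ (v : Fin n → F) (c : F), v ≠ 0 ∧ H i = {x | v ⬝ᵥ x = c})
include hH

lemma isAff_capSet (S : Finset (Fin m)) :
    ∃ B : AffineSubspace F (Fin n → F), (B : Set (Fin n → F)) = capSet H S := by
  choose v c hv hHi using hH
  refine ⟨{ carrier := capSet H S, smul_vsub_vadd_mem' := ?_ }, rfl⟩
  intro t p₁ p₂ p₃ h₁ h₂ h₃
  simp only [capSet, Set.mem_iInter] at *
  intro i hi
  have e₁ := h₁ i hi; have e₂ := h₂ i hi; have e₃ := h₃ i hi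
  rw [hHi i] at e₁ e₂ e₃ ⊢
  simp only [Set.mem_setOf_eq] at *
  simp [vsub_eq_sub, vadd_eq_add, dotProduct_add, dotProduct_smul,
    dotProduct_sub, e₁, e₂, e₃, smul_eq_mul]

lemma adim_capSet_le (S : Finset (Fin m)) : adim F (capSet H S) ≤ n := by
  have := adim_le (F := F) (capSet H S)
  simpa [Module.finrank_pi] using this

lemma codim_capSet_le (S : Finset (Fin m)) (hne : (capSet H S).Nonempty) :
    n - adim F (capSet H S) ≤ S.card := by
  classical
  induction S using Finset.induction_on with
  | empty => simp [capSet_empty, adim_univ, Module.finrank_pi]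
  | @insert j S hj ih =>
    have hsub : capSet H (insert j S) ⊆ capSet H S :=
      capSet_antitone (Finset.subset_insert j S)
    have hneS : (capSet H S).Nonempty := hne.mono hsub
    obtain ⟨B, hB⟩ := isAff_capSet hH S
    obtain ⟨v, c, hv, hHj⟩ := hH j
    have hne' : (capSet H S ∩ H j).Nonempty := by
      rwa [capSet_insert, Set.inter_comm] at hne
    have hkey : adim F (capSet H S) ≤ adim F (capSet H S ∩ H j) + 1 := by
      have := adim_inter_hyp (A := B) hv c (by rw [hB, ← hHj]; exact hne')
      rwa [hB, ← hHj] at this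
    have hins : capSet H (insert j S) = capSet H S ∩ H j := by
      rw [capSet_insert, Set.inter_comm]
    have h1 : adim F (capSet H S) ≤ n := adim_capSet_le hH S
    have h2 := ih hneS
    rw [hins]
    rw [Finset.card_insert_of_notMem hj]
    omega

lemma circuit_capSet_subset (ord : LinearOrder (Fin m)) {C : Finset (Fin m)}
    (hC : C.Nonempty) (hcirc : AffCircuitB H C) :
    capSet H (C.erase (@Finset.max' (Fin m) ord C hC)) ⊆ H (@Finset.max' (Fin m) ord C hC) := by
  classical
  set e := @Finset.max' (Fin m) ord C hC with he
  have heC : e ∈ C := @Finset.max'_mem (Fin m) ord C hC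
  have hJss : C.erase e ⊂ C := Finset.erase_ssubset heC
  have hind : AffIndepB H (C.erase e) := hcirc.2 _ hJss
  have hdep : AffDepB H C := hcirc.1
  have hCsub : capSet H C ⊆ capSet H (C.erase e) := capSet_antitone (Finset.erase_subset e C)
  -- adim facts
  have haC : adim F (capSet H C) ≤ n := adim_capSet_le hH C
  have haJ : adim F (capSet H (C.erase e)) ≤ n := adim_capSet_le hH _
  have hmono : adim F (capSet H C) ≤ adim F (capSet H (C.erase e)) := adim_mono hCsub
  have hcardJ : (C.erase e).card = C.card - 1 := Finset.card_erase_of_mem heC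
  have hCpos : 1 ≤ C.card := Finset.card_pos.2 hC
  have heq : adim F (capSet H C) = adim F (capSet H (C.erase e)) := by
    have h1 : n - adim F (capSet H C) < C.card := hdep.2
    have h2 : n - adim F (capSet H (C.erase e)) = C.card - 1 := by
      have := hind.2; rwa [hcardJ] at this
    omega
  obtain ⟨B1, hB1⟩ := isAff_capSet hH C
  obtain ⟨B2, hB2⟩ := isAff_capSet hH (C.erase e)
  have hBle : (B1 : Set (Fin n → F)) ⊆ (B2 : Set (Fin n → F)) := by rw [hB1, hB2]; exact hCsub
  have hBne : (B1 : Set (Fin n → F)).Nonempty := by rw [hB1]; exact hdep.1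
  have : (B1 : Set (Fin n → F)) = B2 := by
    apply eq_of_subset_adim hBle hBne
    rw [hB1, hB2]; omega
  have hfin : capSet H (C.erase e) = capSet H C := by rw [← hB1, ← hB2, this]
  rw [hfin]
  exact capSet_subset heC

lemma dep_has_circuit : ∀ (S : Finset (Fin m)), AffDepB H S →
    ∃ C : Finset (Fin m), C ⊆ S ∧ AffCircuitB H C := by
  classical
  intro S
  induction S using Finset.strongInduction with
  | _ S ih =>
    intro hdep
    by_cases h : ∀ J : Finset (Fin m), J ⊂ S → AffIndepB H J
    · exact ⟨S, Finset.Subset.rfl, hdep, h⟩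
    · push_neg at h
      obtain ⟨J, hJS, hJ⟩ := h
      have hne : (capSet H J).Nonempty := hdep.1.mono (capSet_antitone hJS.subset)
      have hdepJ : AffDepB H J := by
        refine ⟨hne, ?_⟩
        have hle := codim_capSet_le hH J hne
        rcases lt_or_eq_of_le hle with h' | h'
        · exact h'
        · exact absurd ⟨hne, h'⟩ hJ
      obtain ⟨C, hCJ, hcirc⟩ := ih J hJS hdepJ
      exact ⟨C, hCJ.trans hJS.subset, hcirc⟩

lemma nbc_codim (ord : LinearOrder (Fin m)) {S : Finset (Fin m)}
    (hS : AffNBCB ord H S) : n - adim F (capSet H S) = S.card := by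
  have hne : (capSet H S).Nonempty := hS.1
  have hle := codim_capSet_le hH S hne
  rcases lt_or_eq_of_le hle with h' | h'
  · exfalso
    obtain ⟨C, hCS, hcirc⟩ := dep_has_circuit hH S ⟨hne, h'⟩
    have hCne : C.Nonempty := by
      rw [← Finset.card_pos]
      have := hcirc.1.2
      omega
    exact hS.2 C hCne hcirc
      ((Finset.erase_subset _ _).trans hCS)
  · exact h'

end Comb

section Invol

variable {F : Type*} [Field F] {m n : ℕ} {H : Fin m → Set (Fin n → F)}
variable (ord : LinearOrder (Fin m))

open Classical in
/-- candidates: last elements of circuits whose broken circuit lies in `S` -/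
noncomputable def Cand (H : Fin m → Set (Fin n → F)) (S : Finset (Fin m)) : Finset (Fin m) :=
  Finset.univ.filter (fun e => ∃ (C : Finset (Fin m)) (hC : C.Nonempty),
    AffCircuitB H C ∧ @Finset.max' (Fin m) ord C hC = e ∧ C.erase e ⊆ S)

lemma mem_Cand {S : Finset (Fin m)} {e : Fin m} :
    e ∈ Cand ord H S ↔ ∃ (C : Finset (Fin m)) (hC : C.Nonempty),
      AffCircuitB H C ∧ @Finset.max' (Fin m) ord C hC = e ∧ C.erase e ⊆ S := by
  classical
  simp [Cand]

lemma Cand_mono {S T : Finset (Fin m)} (h : S ⊆ T) : Cand ord H S ⊆ Cand ord H T := by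
  intro e he
  rw [mem_Cand] at *
  obtain ⟨C, hC, hcirc, hmax, hsub⟩ := he
  exact ⟨C, hC, hcirc, hmax, hsub.trans h⟩

lemma mem_Cand_erase {S : Finset (Fin m)} {e : Fin m} (he : e ∈ Cand ord H S) :
    e ∈ Cand ord H (S.erase e) := by
  rw [mem_Cand] at *
  obtain ⟨C, hC, hcirc, hmax, hsub⟩ := he
  refine ⟨C, hC, hcirc, hmax, fun x hx => ?_⟩
  exact Finset.mem_erase.2 ⟨(Finset.mem_erase.1 hx).1, hsub hx⟩

lemma nbc_iff_cand_empty {S : Finset (Fin m)} :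
    AffNBCB ord H S ↔ ((⋂ j ∈ S, H j).Nonempty ∧ Cand ord H S = ∅) := by
  constructor
  · rintro ⟨h1, h2⟩
    refine ⟨h1, Finset.eq_empty_of_forall_notMem fun e he => ?_⟩
    obtain ⟨C, hC, hcirc, hmax, hsub⟩ := (mem_Cand ord).1 he
    exact h2 C hC hcirc (by rwa [hmax])
  · rintro ⟨h1, h2⟩
    refine ⟨h1, fun I hI hcirc hsub => ?_⟩
    have : @Finset.max' (Fin m) ord I hI ∈ Cand ord H S := by
      rw [mem_Cand]
      exact ⟨I, hI, hcirc, rfl, hsub⟩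
    rw [h2] at this
    exact absurd this (Finset.notMem_empty _)

variable (hH : ∀ i, ∃ (v : Fin n → F) (c : F), v ≠ 0 ∧ H i = {x | v ⬝ᵥ x = c})
include hH

lemma cand_capSet_subset {S : Finset (Fin m)} {e : Fin m} (he : e ∈ Cand ord H S) :
    capSet H S ⊆ H e := by
  obtain ⟨C, hC, hcirc, hmax, hsub⟩ := (mem_Cand ord).1 he
  have h1 : capSet H S ⊆ capSet H (C.erase e) := capSet_antitone hsub
  have h2 := circuit_capSet_subset hH ord hC hcirc
  rw [hmax] at h2
  exact h1.trans h2

/-- the involution toggle and its properties -/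
lemma invol_spec {S : Finset (Fin m)} (hCand : (Cand ord H S).Nonempty)
    {e : Fin m} (he : e = @Finset.min' (Fin m) ord (Cand ord H S) hCand)
    {T : Finset (Fin m)} (hT : T = if e ∈ S then S.erase e else insert e S) :
    capSet H T = capSet H S ∧ (∃ hc2 : (Cand ord H T).Nonempty,
      @Finset.min' (Fin m) ord (Cand ord H T) hc2 = e) ∧
      (-1:ℤ)^T.card = -(-1:ℤ)^S.card ∧ T ≠ S := by
  classical
  have heS : e ∈ Cand ord H S := he ▸ @Finset.min'_mem (Fin m) ord _ hCand
  by_cases hes : e ∈ S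
  · rw [hT, if_pos hes]
    have he' : e ∈ Cand ord H (S.erase e) := mem_Cand_erase ord heS
    have hcapsub : capSet H (S.erase e) ⊆ H e := cand_capSet_subset ord hH he'
    have hcap : capSet H (S.erase e) = capSet H S := by
      conv_rhs => rw [← Finset.insert_erase hes]
      rw [capSet_insert, Set.inter_eq_self_of_subset_right hcapsub]
    have hsubC : Cand ord H (S.erase e) ⊆ Cand ord H S :=
      Cand_mono ord (Finset.erase_subset e S)
    refine ⟨hcap, ⟨⟨e, he'⟩, ?_⟩, ?_, ?_⟩
    · apply ord.le_antisymm
      · exact @Finset.min'_le (Fin m) ord _ _ he'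
      · apply @Finset.le_min' (Fin m) ord
        intro y hy
        rw [he]
        exact @Finset.min'_le (Fin m) ord _ _ (hsubC hy)
    · have h1 : S.card ≠ 0 := by
        intro h0
        rw [Finset.card_eq_zero] at h0
        subst h0; exact absurd hes (Finset.notMem_empty e)
      rw [Finset.card_erase_of_mem hes]
      obtain ⟨c, hc⟩ : ∃ c, S.card = c + 1 := ⟨S.card - 1, by omega⟩
      rw [hc]
      simp [pow_succ]
    · exact ne_of_lt (Finset.erase_ssubset hes)
  · rw [hT, if_neg hes]
    have hcapsub : capSet H S ⊆ H e := cand_capSet_subset ord hH heS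
    have hcap : capSet H (insert e S) = capSet H S := by
      rw [capSet_insert, Set.inter_eq_self_of_subset_right hcapsub]
    have he' : e ∈ Cand ord H (insert e S) :=
      Cand_mono ord (Finset.subset_insert e S) heS
    refine ⟨hcap, ⟨⟨e, he'⟩, ?_⟩, ?_, ?_⟩
    · apply ord.le_antisymm
      · exact @Finset.min'_le (Fin m) ord _ _ he'
      · apply @Finset.le_min' (Fin m) ord
        intro y hy
        obtain ⟨C, hC, hcirc, hmax, hsub⟩ := (mem_Cand ord).1 hy
        by_cases heC : e ∈ C.erase y
        · have : e ∈ C := Finset.mem_of_mem_erase heC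
          rw [← hmax]
          exact @Finset.le_max' (Fin m) ord C e this
        · have hsub' : C.erase y ⊆ S := by
            intro x hx
            rcases Finset.mem_insert.1 (hsub hx) with h | h
            · exact absurd (h ▸ hx) heC
            · exact h
          have : y ∈ Cand ord H S := (mem_Cand ord).2 ⟨C, hC, hcirc, hmax, hsub'⟩
          rw [he]
          exact @Finset.min'_le (Fin m) ord _ _ this
    · rw [Finset.card_insert_of_notMem hes, pow_succ]
      ring
    · exact fun h => hes (h ▸ Finset.mem_insert_self e S)

open Classical in
/-- the involution on non-NBC central sets -/
noncomputable def tog (ord : LinearOrder (Fin m)) (H : Fin m → Set (Fin n → F))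
    (S : Finset (Fin m)) : Finset (Fin m) :=
  if h : (Cand ord H S).Nonempty then
    (if @Finset.min' (Fin m) ord (Cand ord H S) h ∈ S then
      S.erase (@Finset.min' (Fin m) ord (Cand ord H S) h)
    else insert (@Finset.min' (Fin m) ord (Cand ord H S) h) S)
  else S

omit hH in
lemma tog_eq {S : Finset (Fin m)} (h : (Cand ord H S).Nonempty) :
    tog ord H S = if @Finset.min' (Fin m) ord (Cand ord H S) h ∈ S then
      S.erase (@Finset.min' (Fin m) ord (Cand ord H S) h)
    else insert (@Finset.min' (Fin m) ord (Cand ord H S) h) S := by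
  rw [tog, dif_pos h]

lemma tog_spec {S : Finset (Fin m)} (hCand : (Cand ord H S).Nonempty) :
    capSet H (tog ord H S) = capSet H S ∧ (Cand ord H (tog ord H S)).Nonempty ∧
      tog ord H (tog ord H S) = S ∧
      (-1:ℤ)^(tog ord H S).card = -(-1:ℤ)^S.card ∧ tog ord H S ≠ S := by
  classical
  set e := @Finset.min' (Fin m) ord (Cand ord H S) hCand with he
  have htog : tog ord H S = if e ∈ S then S.erase e else insert e S := tog_eq ord hCand
  obtain ⟨hcap, ⟨hc2, hmin⟩, hpow, hne⟩ := invol_spec ord hH hCand he htog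
  refine ⟨hcap, hc2, ?_, hpow, hne⟩
  rw [tog_eq ord hc2, hmin]
  by_cases hes : e ∈ S
  · rw [htog, if_pos hes] at *
    rw [if_neg (Finset.notMem_erase e S)]
    exact Finset.insert_erase hes
  · rw [htog, if_neg hes] at *
    rw [if_pos (Finset.mem_insert_self e S)]
    exact Finset.erase_insert hes

open Classical in
/-- The central counting lemma. -/
lemma count_lemma (k : ℕ) :
    ∑ S ∈ Finset.univ.filter (fun S : Finset (Fin m) =>
        (capSet H S).Nonempty ∧ n - adim F (capSet H S) = k), (-1 : ℤ) ^ S.card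
      = (-1:ℤ)^k * ((Finset.univ.filter (fun S : Finset (Fin m) =>
          AffNBCB ord H S ∧ S.card = k)).card : ℤ) := by
  classical
  set A := Finset.univ.filter (fun S : Finset (Fin m) =>
      (capSet H S).Nonempty ∧ n - adim F (capSet H S) = k) with hA
  rw [← Finset.sum_filter_add_sum_filter_not A (fun S => AffNBCB ord H S)]
  have hbad : ∑ S ∈ A.filter (fun S => ¬ AffNBCB ord H S), (-1 : ℤ) ^ S.card = 0 := by
    apply Finset.sum_involution (fun S _ => tog ord H S)
    · -- sums to zero
      intro S hS
      have hSc : (Cand ord H S).Nonempty := by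
        simp only [Finset.mem_filter, hA] at hS
        obtain ⟨⟨-, hcen, -⟩, hnbc⟩ := hS
        rw [nbc_iff_cand_empty] at hnbc
        push_neg at hnbc
        exact hnbc (by exact hcen)
      obtain ⟨-, -, -, hpow, -⟩ := tog_spec ord hH hSc
      rw [hpow]; ring
    · -- g ≠ id
      intro S hS _
      have hSc : (Cand ord H S).Nonempty := by
        simp only [Finset.mem_filter, hA] at hS
        obtain ⟨⟨-, hcen, -⟩, hnbc⟩ := hS
        rw [nbc_iff_cand_empty] at hnbc
        push_neg at hnbc
        exact hnbc (by exact hcen)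
      exact (tog_spec ord hH hSc).2.2.2.2
    · -- g mem
      intro S hS
      simp only [Finset.mem_filter, hA] at hS ⊢
      obtain ⟨⟨-, hcen, hcdim⟩, hnbc⟩ := hS
      have hSc : (Cand ord H S).Nonempty := by
        rw [nbc_iff_cand_empty] at hnbc
        push_neg at hnbc
        exact hnbc (by exact hcen)
      obtain ⟨hcap, hc2, -, -, -⟩ := tog_spec ord hH hSc
      refine ⟨⟨Finset.mem_univ _, ?_, ?_⟩, ?_⟩
      · show (capSet H (tog ord H S)).Nonempty
        rw [hcap]; exact hcen
      · show n - adim F (capSet H (tog ord H S)) = k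
        rw [hcap]; exact hcdim
      · rw [nbc_iff_cand_empty]
        push_neg
        intro _
        exact hc2
    · -- involutive
      intro S hS
      have hSc : (Cand ord H S).Nonempty := by
        simp only [Finset.mem_filter, hA] at hS
        obtain ⟨⟨-, hcen, -⟩, hnbc⟩ := hS
        rw [nbc_iff_cand_empty] at hnbc
        push_neg at hnbc
        exact hnbc (by exact hcen)
      exact (tog_spec ord hH hSc).2.2.1
  rw [hbad, add_zero]
  have hgood : A.filter (fun S => AffNBCB ord H S)
      = Finset.univ.filter (fun S : Finset (Fin m) => AffNBCB ord H S ∧ S.card = k) := by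
    ext S
    simp only [Finset.mem_filter, hA, Finset.mem_univ, true_and]
    constructor
    · rintro ⟨⟨hcen, hcdim⟩, hnbc⟩
      exact ⟨hnbc, by rw [← nbc_codim hH ord hnbc]; exact hcdim⟩
    · rintro ⟨hnbc, hcard⟩
      exact ⟨⟨hnbc.1, by rw [nbc_codim hH ord hnbc]; exact hcard⟩, hnbc⟩
  rw [hgood]
  rw [Finset.sum_congr rfl (fun S hS => ?_)]
  · rw [Finset.sum_const, nsmul_eq_mul, mul_comm]
  · simp only [Finset.mem_filter] at hS
    rw [hS.2.2]

end Invol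

lemma mu_eq_of_sum_Ici {α : Type*} [PartialOrder α] [OrderTop α] [Fintype α]
    [LocallyFiniteOrder α] [DecidableEq α] (f : α → ℤ)
    (hf : ∀ x : α, ∑ y ∈ Finset.Ici x, f y = if x = ⊤ then 1 else 0) (x : α) :
    IncidenceAlgebra.mu ℤ x ⊤ = f x := by
  have h := IncidenceAlgebra.moebius_inversion_top f (fun y => if y = ⊤ then 1 else 0)
    (fun y => (hf y).symm) x
  rw [h]
  rw [Finset.sum_congr rfl (fun y _ => by rw [mul_ite, mul_one, mul_zero])]
  rw [Finset.sum_ite_eq' (Finset.Ici x) ⊤ (fun y => IncidenceAlgebra.mu ℤ x y)]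
  rw [if_pos (Finset.mem_Ici.2 le_top)]


section AuxMain
variable {F : Type*} [Field F] {m n : ℕ}

lemma mem_flats_iff {H : Fin m → Set (Fin n → F)} {W : Set (Fin n → F)} :
    W ∈ flats Set.univ H ↔ (∃ S : Finset (Fin m), W = capSet H S) ∧ W.Nonempty := by
  classical
  constructor
  · rintro ⟨⟨S, rfl⟩, hne⟩
    refine ⟨⟨(S.toFinite).toFinset, ?_⟩, hne⟩
    rw [Set.univ_inter]
    unfold capSet
    ext x
    simp [Set.Finite.mem_toFinset]
  · rintro ⟨⟨S, rfl⟩, hne⟩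
    refine ⟨⟨(S : Set (Fin m)), ?_⟩, hne⟩
    rw [Set.univ_inter]
    unfold capSet
    ext x
    simp

open Classical in
/-- canonical flat of a subfamily -/
noncomputable def flatOf (H : Fin m → Set (Fin n → F)) (S : Finset (Fin m)) :
    ↥(flats (Set.univ : Set (Fin n → F)) H) :=
  if h : (capSet H S).Nonempty then ⟨capSet H S, mem_flats_iff.2 ⟨⟨S, rfl⟩, h⟩⟩
  else ⟨Set.univ, self_mem_flats H ⟨fun _ => 0, trivial⟩⟩

lemma flatOf_coe {H : Fin m → Set (Fin n → F)} {S : Finset (Fin m)}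
    (h : (capSet H S).Nonempty) : (flatOf H S : Set (Fin n → F)) = capSet H S := by
  rw [flatOf, dif_pos h]

end AuxMain

/-- **Theorem 3.1, Affine Broken Circuit Theorem.** Let `B = {H 1, …, H m}`
be an arrangement of affine hyperplanes in `F^n`, `r` its rank (the maximal codimension of
a member of the intersection poset), and write
`χ(B, t) = a_0 t^n - a_1 t^(n-1) + ⋯ + (-1)^r a_r t^(n-r)`. Then for `0 ≤ k ≤ r` the
coefficient `a_k = (-1)^k · coeff_{n-k} χ(B, t)` is the number of `k`-element affine NBC
subsets of `[m]`. -/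
theorem affine_broken_circuit_theorem
    (hn : 0 < n) (ord : LinearOrder (Fin m)) (H : Fin m → Set (Fin n → F))
    (hH : ∀ i, ∃ (v : Fin n → F) (c : F), v ≠ 0 ∧ H i = {x | v ⬝ᵥ x = c}) :
    ∀ k ≤ sSup {c : ℕ | ∃ W ∈ flats Set.univ H, c = n - adim F W},
      (-1 : ℤ) ^ k * (chi F Set.univ H).coeff (n - k) =
        ({J : Finset (Fin m) | AffNBCB ord H J ∧ J.card = k}.ncard : ℤ) := by
  classical
  intro k hk
  have hV : (Set.univ : Set (Fin n → F)).Nonempty := ⟨fun _ => 0, trivial⟩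
  letI instF : Fintype ↥(flats (Set.univ : Set (Fin n → F)) H) := (flats_finite _ H).fintype
  letI instL : LocallyFiniteOrder ↥(flats (Set.univ : Set (Fin n → F)) H) :=
    Fintype.toLocallyFiniteOrder
  letI instT : OrderTop ↥(flats (Set.univ : Set (Fin n → F)) H) :=
    { top := ⟨Set.univ, self_mem_flats H hV⟩
      le_top := fun W => (Set.subset_univ (W : Set (Fin n → F)) : _ ≤ _) }
  have hchi : chi F Set.univ H = ∑ W : ↥(flats Set.univ H),
      Polynomial.C (IncidenceAlgebra.mu ℤ W (⊤ : ↥(flats Set.univ H))) *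
        Polynomial.X ^ adim F (W : Set (Fin n → F)) := by
    rw [chi, dif_pos hV]
    rfl
  set f : ↥(flats (Set.univ : Set (Fin n → F)) H) → ℤ := fun W =>
    ∑ S ∈ Finset.univ.filter (fun S : Finset (Fin m) => capSet H S = (W : Set (Fin n → F))),
      (-1:ℤ)^S.card with hf
  -- the zeta-sum of f is the delta at ⊤
  have hg : ∀ W : ↥(flats (Set.univ : Set (Fin n → F)) H),
      ∑ W' ∈ Finset.Ici W, f W' = if W = ⊤ then 1 else 0 := by
    intro W
    have hWne : (W : Set (Fin n → F)).Nonempty := W.2.2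
    have hmaps : ∀ S ∈ Finset.univ.filter
        (fun S : Finset (Fin m) => (W : Set (Fin n → F)) ⊆ capSet H S),
        flatOf H S ∈ Finset.Ici W := by
      intro S hS
      simp only [Finset.mem_filter] at hS
      have hcen : (capSet H S).Nonempty := hWne.mono hS.2
      rw [Finset.mem_Ici]
      show (W : Set (Fin n → F)) ⊆ (flatOf H S : Set (Fin n → F))
      rw [flatOf_coe hcen]
      exact hS.2
    have h1 := Finset.sum_fiberwise_of_maps_to hmaps (fun S => (-1:ℤ)^S.card)
    have h2 : ∑ W' ∈ Finset.Ici W, f W'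
        = ∑ S ∈ Finset.univ.filter
            (fun S : Finset (Fin m) => (W : Set (Fin n → F)) ⊆ capSet H S), (-1:ℤ)^S.card := by
      rw [← h1]
      refine Finset.sum_congr rfl (fun W' hW' => ?_)
      rw [hf]
      apply Finset.sum_congr _ (fun _ _ => rfl)
      ext S
      simp only [Finset.mem_filter, Finset.mem_univ, true_and]
      constructor
      · intro hS
        have hcen : (capSet H S).Nonempty := by
          rw [hS]; exact W'.2.2
        have hle : W ≤ W' := Finset.mem_Ici.1 hW'
        refine ⟨?_, Subtype.ext (by rw [flatOf_coe hcen, hS])⟩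
        rw [hS]
        exact hle
      · rintro ⟨hsub, rfl⟩
        have hcen : (capSet H S).Nonempty := hWne.mono hsub
        rw [flatOf_coe hcen]
    rw [h2]
    have h3 : Finset.univ.filter
        (fun S : Finset (Fin m) => (W : Set (Fin n → F)) ⊆ capSet H S)
        = (Finset.univ.filter (fun i : Fin m => (W : Set (Fin n → F)) ⊆ H i)).powerset := by
      ext S
      simp only [Finset.mem_filter, Finset.mem_univ, true_and, Finset.mem_powerset]
      constructor
      · intro hsub i hi
        simp only [Finset.mem_filter, Finset.mem_univ, true_and]
        exact hsub.trans (capSet_subset hi)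
      · intro hsub x hx
        refine Set.mem_iInter₂.2 (fun j hj => ?_)
        have := hsub hj
        simp only [Finset.mem_filter, Finset.mem_univ, true_and] at this
        exact this hx
    rw [h3, Finset.sum_powerset_neg_one_pow_card]
    congr 1
    simp only [eq_iff_iff]
    constructor
    · intro hemp
      -- no hyperplane contains W, so W is the whole space
      obtain ⟨⟨S₀, hS₀⟩, hne⟩ := W.2
      have hS₀emp : S₀ = ∅ := by
        by_contra hS₀ne
        obtain ⟨i, hi⟩ := Set.nonempty_iff_ne_empty.2 hS₀ne
        have hWi : (W : Set (Fin n → F)) ⊆ H i := by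
          rw [hS₀]
          intro x hx
          exact Set.mem_iInter₂.1 hx.2 i hi
        have : i ∈ Finset.univ.filter (fun i : Fin m => (W : Set (Fin n → F)) ⊆ H i) := by
          simp only [Finset.mem_filter, Finset.mem_univ, true_and]; exact hWi
        rw [hemp] at this
        exact absurd this (Finset.notMem_empty _)
      apply Subtype.ext
      show (W : Set (Fin n → F)) = Set.univ
      rw [hS₀, hS₀emp]
      simp
    · intro hW
      rw [Finset.eq_empty_iff_forall_notMem]
      intro i hi
      simp only [Finset.mem_filter, Finset.mem_univ, true_and] at hi
      rw [hW] at hi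
      have hWtop : ((⊤ : ↥(flats (Set.univ : Set (Fin n → F)) H)) : Set (Fin n → F))
          = Set.univ := rfl
      rw [hWtop] at hi
      obtain ⟨v, c, hv, hHi⟩ := hH i
      exact (hypA_ne_univ hv c) (by rw [← hHi]; exact Set.eq_univ_of_univ_subset hi)
  have hmu : ∀ W : ↥(flats (Set.univ : Set (Fin n → F)) H),
      IncidenceAlgebra.mu ℤ W (⊤ : ↥(flats (Set.univ : Set (Fin n → F)) H)) = f W :=
    mu_eq_of_sum_Ici f hg
  -- Whitney's theorem
  have hWhitney : chi F Set.univ H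
      = ∑ S ∈ Finset.univ.filter (fun S : Finset (Fin m) => (capSet H S).Nonempty),
          Polynomial.C ((-1:ℤ)^S.card) * Polynomial.X ^ (adim F (capSet H S)) := by
    rw [hchi]
    have hstep : ∀ W : ↥(flats (Set.univ : Set (Fin n → F)) H),
        Polynomial.C (IncidenceAlgebra.mu ℤ W (⊤ : ↥(flats (Set.univ : Set (Fin n → F)) H)))
          * Polynomial.X ^ adim F (W : Set (Fin n → F))
        = ∑ S ∈ Finset.univ.filter
            (fun S : Finset (Fin m) => capSet H S = (W : Set (Fin n → F))),
            Polynomial.C ((-1:ℤ)^S.card) * Polynomial.X ^ (adim F (capSet H S)) := by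
      intro W
      rw [hmu W, hf]
      rw [map_sum, Finset.sum_mul]
      refine Finset.sum_congr rfl (fun S hS => ?_)
      simp only [Finset.mem_filter] at hS
      rw [hS.2]
    rw [Finset.sum_congr rfl (fun W _ => hstep W)]
    have hmaps : ∀ S ∈ Finset.univ.filter
        (fun S : Finset (Fin m) => (capSet H S).Nonempty),
        flatOf H S ∈ (Finset.univ : Finset ↥(flats (Set.univ : Set (Fin n → F)) H)) :=
      fun _ _ => Finset.mem_univ _
    have h1 := Finset.sum_fiberwise_of_maps_to hmaps
      (fun S => Polynomial.C ((-1:ℤ)^S.card) * Polynomial.X ^ (adim F (capSet H S)))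
    rw [← h1]
    refine Finset.sum_congr rfl (fun W _ => ?_)
    apply Finset.sum_congr _ (fun _ _ => rfl)
    ext S
    simp only [Finset.mem_filter, Finset.mem_univ, true_and]
    constructor
    · intro hS
      have hcen : (capSet H S).Nonempty := by rw [hS]; exact W.2.2
      exact ⟨hcen, Subtype.ext (by rw [flatOf_coe hcen, hS])⟩
    · rintro ⟨hcen, rfl⟩
      rw [flatOf_coe hcen]
  -- the rank bound
  have hkn : k ≤ n := by
    refine hk.trans (csSup_le ⟨n - adim F (Set.univ : Set (Fin n → F)),
      Set.univ, self_mem_flats H hV, rfl⟩ ?_)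
    rintro c ⟨W, hW, rfl⟩
    exact Nat.sub_le n _
  -- coefficient extraction
  have hcoeff : (chi F Set.univ H).coeff (n - k)
      = ∑ S ∈ Finset.univ.filter (fun S : Finset (Fin m) =>
          (capSet H S).Nonempty ∧ n - adim F (capSet H S) = k), (-1:ℤ)^S.card := by
    rw [hWhitney, Polynomial.finset_sum_coeff]
    rw [Finset.sum_filter, Finset.sum_filter]
    refine Finset.sum_congr rfl (fun S _ => ?_)
    rw [Polynomial.coeff_C_mul, Polynomial.coeff_X_pow]
    have hle : adim F (capSet H S) ≤ n := adim_capSet_le hH S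
    by_cases h1 : (capSet H S).Nonempty
    · simp only [if_pos h1]
      by_cases h2 : n - adim F (capSet H S) = k
      · have : n - k = adim F (capSet H S) := by omega
        rw [if_pos (And.intro h1 h2), if_pos this, mul_one]
      · have : ¬ (n - k = adim F (capSet H S)) := by omega
        rw [if_neg (fun hcon => h2 (And.right hcon)), if_neg this, mul_zero]
    · rw [if_neg h1, if_neg (fun hcon => h1 (And.left hcon))]
  rw [hcoeff]
  have hcl := count_lemma ord hH k
  rw [hcl]
  have hncard : ({J : Finset (Fin m) | AffNBCB ord H J ∧ J.card = k}.ncard : ℤ)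
      = ((Finset.univ.filter (fun S : Finset (Fin m) =>
          AffNBCB ord H S ∧ S.card = k)).card : ℤ) := by
    congr 1
    rw [show {J : Finset (Fin m) | AffNBCB ord H J ∧ J.card = k}
        = ↑(Finset.univ.filter (fun S : Finset (Fin m) => AffNBCB ord H S ∧ S.card = k)) by
      ext J; simp]
    rw [Set.ncard_coe_finset]
  rw [hncard, ← mul_assoc, ← mul_pow]
  norm_num
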